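/- For every word q over an alphabet, if there exist a natural number k ≥ 0 and words u, v, w such that u·v·w is self-join-free and q is a factor of u·w·(u·v)^k (condition B3), then q satisfies condition C3: whenever q = a·R·b·R·c for a letter R and words a, b, c, q is a factor of a·R·b·R·b·R·c. -/

import Mathlib

/-- k-fold concatenation of a word with itself. -/
def wpow {α : Type*} (w : List α) : ℕ → List α
  | 0 => []
  | k + 1 => w ++ wpow w k

/-- Condition C3: whenever `q = a·R·b·R·c`, `q` is a factor of `a·R·b·R·b·R·c`. -/
def CondC3 {α : Type*} (q : List α) : Prop :=
  ∀ (a b c : List α) (R : α), q = a ++ [R] ++ b ++ [R] ++ c →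
    q <:+: a ++ [R] ++ b ++ [R] ++ b ++ [R] ++ c

/-- B3: `q` is a factor of `u·w·(u·v)^k` for some self-join-free `u·v·w`. -/
def CondB3 {α : Type*} (q : List α) : Prop :=
  ∃ (k : ℕ) (u v w : List α), (u ++ v ++ w).Nodup ∧
    q <:+: u ++ w ++ wpow (u ++ v) k

/-!
Let `s = u ++ w ++ (u ++ v)^k`. As `u ++ v ++ w` has no repeated letter, every position of `s`
carries the letter of a unique position of `u ++ v ++ w` (`sourceIndex`), and two positions of
`s` carry the same letter exactly when they have the same source. Take the two displayed
occurrences of `R` in a factor `a ++ [R] ++ b ++ [R] ++ c` of `s`. Neither lies in `w`, whose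
letters occur once in `s`. If both lie in the periodic tail, they are a multiple of `|u ++ v|`
apart, so what follows the second `R` repeats what follows the first: `c` is a prefix of
`b ++ [R] ++ c`. Otherwise the first lies in the leading `u` and the second in the tail at the
same offset modulo `|u ++ v|`, so what precedes them agrees: `a` is a suffix of `a ++ [R] ++ b`.
Either way, pumping `b ++ [R]` once more keeps the factor.
-/

section

variable {α : Type*}

theorem length_wpow (t : List α) (k : ℕ) : (wpow t k).length = k * t.length := by
  induction k with
  | zero => simp [wpow]
  | succ k ih => simp only [wpow, List.length_append, ih]; ring

theorem getElem?_wpow {t : List α} {k y : ℕ} (hy : y < k * t.length) :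
    (wpow t k)[y]? = t[y % t.length]? := by
  induction k generalizing y with
  | zero => simp at hy
  | succ k ih =>
    rw [wpow]
    rcases lt_or_ge y t.length with h | h
    · rw [List.getElem?_append_left h, Nat.mod_eq_of_lt h]
    · rw [List.getElem?_append_right h, ih (by rw [Nat.succ_mul] at hy; omega),
        ← Nat.mod_eq_sub_mod h]

/-- The position in `u ++ v ++ w` whose letter stands at position `x` of
`u ++ w ++ wpow (u ++ v) k` (meaningful for `x` within bounds). -/
def sourceIndex (u v w : List α) (x : ℕ) : ℕ :=
  if x < u.length then x
  else if x < u.length + w.length then x + v.length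
  else (x - (u.length + w.length)) % (u.length + v.length)

section
variable {u v w : List α} {k : ℕ}

theorem getElem?_eq_getElem?_sourceIndex {x : ℕ} (hx : x < (u ++ w ++ wpow (u ++ v) k).length) :
    (u ++ w ++ wpow (u ++ v) k)[x]? = (u ++ v ++ w)[sourceIndex u v w x]? := by
  simp only [List.length_append, length_wpow] at hx
  unfold sourceIndex
  split_ifs with hu hw
  · simp [List.getElem?_append_left, hu]
  · rw [List.getElem?_append_left (by simpa using hw), List.getElem?_append_right (by omega),
      List.getElem?_append_right (by simp; omega)]
    congr 1
    simp only [List.length_append]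
    omega
  · have hp : 0 < u.length + v.length := Nat.pos_of_ne_zero fun h ↦ by simp [h] at hx; omega
    rw [List.getElem?_append_right (by simp; omega), getElem?_wpow (by simp; omega)]
    simp only [List.length_append] at *
    exact (List.getElem?_append_left (by simpa using Nat.mod_lt _ hp)).symm

theorem sourceIndex_of_lt {x : ℕ} (hx : x < u.length) : sourceIndex u v w x = x := if_pos hx

theorem sourceIndex_of_ge {x : ℕ} (hx : u.length + w.length ≤ x) :
    sourceIndex u v w x = (x - (u.length + w.length)) % (u.length + v.length) := by
  rw [sourceIndex, if_neg (by omega), if_neg (by omega)]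

theorem sourceIndex_eq_of_getElem?_eq (hnd : (u ++ v ++ w).Nodup) {x y : ℕ} {R : α}
    (hx : (u ++ w ++ wpow (u ++ v) k)[x]? = some R)
    (hy : (u ++ w ++ wpow (u ++ v) k)[y]? = some R) :
    sourceIndex u v w x = sourceIndex u v w y := by
  rw [getElem?_eq_getElem?_sourceIndex (List.getElem?_eq_some_iff.1 hx).1] at hx
  rw [getElem?_eq_getElem?_sourceIndex (List.getElem?_eq_some_iff.1 hy).1] at hy
  exact (List.getElem?_inj (List.getElem?_eq_some_iff.1 hx).1 hnd).1 (hx.trans hy.symm)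

theorem getElem?_eq_of_sourceIndex_eq {x y : ℕ} (hx : x < (u ++ w ++ wpow (u ++ v) k).length)
    (hy : y < (u ++ w ++ wpow (u ++ v) k).length) (h : sourceIndex u v w x = sourceIndex u v w y) :
    (u ++ w ++ wpow (u ++ v) k)[x]? = (u ++ w ++ wpow (u ++ v) k)[y]? := by
  rw [getElem?_eq_getElem?_sourceIndex hx, getElem?_eq_getElem?_sourceIndex hy, h]

theorem modEq_or_mod_eq_of_getElem?_eq (hnd : (u ++ v ++ w).Nodup) {i j : ℕ} {R : α}
    (hij : i < j) (hi : (u ++ w ++ wpow (u ++ v) k)[i]? = some R)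
    (hj : (u ++ w ++ wpow (u ++ v) k)[j]? = some R) :
    (u.length + w.length ≤ i ∧
        i - (u.length + w.length) ≡ j - (u.length + w.length) [MOD u.length + v.length]) ∨
      (i < u.length ∧ u.length + w.length ≤ j ∧
        (j - (u.length + w.length)) % (u.length + v.length) = i) := by
  have hjs := (List.getElem?_eq_some_iff.1 hj).1
  simp only [List.length_append, length_wpow] at hjs
  have hsrc := sourceIndex_eq_of_getElem?_eq hnd hi hj
  -- distinct positions of `u ++ w` have distinct sources
  have hBj : u.length + w.length ≤ j := by
    by_contra!
    unfold sourceIndex at hsrc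
    split_ifs at hsrc <;> omega
  have hp : 0 < u.length + v.length :=
    Nat.pos_of_ne_zero fun h ↦ by rw [h, mul_zero] at hjs; omega
  have hjp := Nat.mod_lt (j - (u.length + w.length)) hp
  rw [sourceIndex_of_ge hBj] at hsrc
  unfold sourceIndex at hsrc
  split_ifs at hsrc <;> first | omega | exact .inl ⟨by omega, hsrc⟩

theorem drop_prefix_drop_of_modEq {i j : ℕ} (hBi : u.length + w.length ≤ i) (hij : i ≤ j)
    (hmod : i - (u.length + w.length) ≡ j - (u.length + w.length) [MOD u.length + v.length]) :
    (u ++ w ++ wpow (u ++ v) k).drop j <+: (u ++ w ++ wpow (u ++ v) k).drop i := by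
  rw [List.prefix_iff_getElem?]
  intro m hm
  rw [List.length_drop] at hm
  rw [List.getElem_drop, List.getElem?_drop, ← List.getElem?_eq_getElem]
  refine getElem?_eq_of_sourceIndex_eq (by omega) (by omega) ?_
  rw [sourceIndex_of_ge (by omega), sourceIndex_of_ge (by omega),
    Nat.sub_add_comm hBi, Nat.sub_add_comm (hBi.trans hij)]
  exact hmod.add_right m

theorem take_suffix_take_of_mod_eq {i j : ℕ} (hiu : i < u.length)
    (hBj : u.length + w.length ≤ j) (hjs : j < (u ++ w ++ wpow (u ++ v) k).length)
    (hmod : (j - (u.length + w.length)) % (u.length + v.length) = i) :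
    (u ++ w ++ wpow (u ++ v) k).take (i + 1) <:+ (u ++ w ++ wpow (u ++ v) k).take (j + 1) := by
  have hlen_i : ((u ++ w ++ wpow (u ++ v) k).take (i + 1)).length = i + 1 := by
    rw [List.length_take]; omega
  have hlen_j : ((u ++ w ++ wpow (u ++ v) k).take (j + 1)).length = j + 1 := by
    rw [List.length_take]; omega
  rw [List.suffix_iff_getElem?]
  refine ⟨by omega, fun m hm ↦ ?_⟩
  simp only [hlen_i, hlen_j]
  rw [List.getElem_take, List.getElem?_take, if_pos (by omega), ← List.getElem?_eq_getElem]
  refine getElem?_eq_of_sourceIndex_eq (by omega) (by omega) ?_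
  have hdiv := Nat.div_add_mod (j - (u.length + w.length)) (u.length + v.length)
  rw [sourceIndex_of_ge (by omega), sourceIndex_of_lt (by omega),
    show m + (j + 1) - (i + 1) - (u.length + w.length)
      = m + (u.length + v.length) * ((j - (u.length + w.length)) / (u.length + v.length)) by
      omega,
    Nat.add_mul_mod_self_left, Nat.mod_eq_of_lt (by omega)]

theorem drop_prefix_drop_or_take_suffix_take (hnd : (u ++ v ++ w).Nodup) {i j : ℕ} {R : α}
    (hij : i < j) (hi : (u ++ w ++ wpow (u ++ v) k)[i]? = some R)
    (hj : (u ++ w ++ wpow (u ++ v) k)[j]? = some R) :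
    (u ++ w ++ wpow (u ++ v) k).drop j <+: (u ++ w ++ wpow (u ++ v) k).drop i ∨
      (u ++ w ++ wpow (u ++ v) k).take (i + 1) <:+ (u ++ w ++ wpow (u ++ v) k).take (j + 1) := by
  rcases modEq_or_mod_eq_of_getElem?_eq hnd hij hi hj with ⟨hBi, hmod⟩ | ⟨hiu, hBj, hmod⟩
  · exact .inl (drop_prefix_drop_of_modEq hBi hij.le hmod)
  · exact .inr (take_suffix_take_of_mod_eq hiu hBj (List.getElem?_eq_some_iff.1 hj).1 hmod)

theorem prefix_or_suffix_of_append_eq (hnd : (u ++ v ++ w).Nodup) {x y z : List α} {R : α}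
    (hs : x ++ [R] ++ y ++ [R] ++ z = u ++ w ++ wpow (u ++ v) k) :
    z <+: y ++ [R] ++ z ∨ x <:+ x ++ [R] ++ y := by
  have hi : (u ++ w ++ wpow (u ++ v) k)[x.length]? = some R := by simp [← hs]
  have hj : (u ++ w ++ wpow (u ++ v) k)[x.length + (y.length + 1)]? = some R := by simp [← hs]
  rcases drop_prefix_drop_or_take_suffix_take hnd (by omega) hi hj with h | h <;>
    rw [← hs] at h
  · left
    simpa [List.drop_append, List.drop_eq_nil_of_le] using h
  · right
    rw [Nat.add_assoc x.length] at h
    have h' : x ++ [R] <:+ x ++ [R] ++ y ++ [R] := by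
      simpa [List.take_append, List.take_of_length_le] using h
    exact ((List.suffix_append_inj_of_length_eq rfl).1 h').1

theorem prefix_or_suffix_of_isInfix (hnd : (u ++ v ++ w).Nodup) {a b c : List α} {R : α}
    (hq : a ++ [R] ++ b ++ [R] ++ c <:+: u ++ w ++ wpow (u ++ v) k) :
    c <+: b ++ [R] ++ c ∨ a <:+ a ++ [R] ++ b := by
  obtain ⟨pre, suf, hs⟩ := hq
  have hs' : pre ++ a ++ [R] ++ b ++ [R] ++ (c ++ suf) = u ++ w ++ wpow (u ++ v) k := by
    rw [← hs]; simp
  rcases prefix_or_suffix_of_append_eq hnd hs' with h | h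
  · left
    exact List.prefix_of_prefix_length_le ((List.prefix_append c suf).trans (by simpa using h))
      (List.prefix_append _ suf) (by simp; omega)
  · right
    exact List.suffix_of_suffix_length_le ((List.suffix_append pre a).trans (by simpa using h))
      (List.suffix_append pre _) (by simp)

end

theorem isInfix_of_prefix_or_suffix {a b c : List α} {R : α}
    (h : c <+: b ++ [R] ++ c ∨ a <:+ a ++ [R] ++ b) :
    a ++ [R] ++ b ++ [R] ++ c <:+: a ++ [R] ++ b ++ [R] ++ b ++ [R] ++ c := by
  rcases h with hc | ha
  · simpa using ((List.prefix_append_right_inj (a ++ [R] ++ b ++ [R])).2 hc).isInfix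
  · have hs : a ++ ([R] ++ b ++ [R] ++ c) <:+ a ++ [R] ++ b ++ ([R] ++ b ++ [R] ++ c) :=
      (List.suffix_append_inj_of_length_eq rfl).2 ⟨ha, rfl⟩
    simpa using hs.isInfix

end

theorem stmt_19 {α : Type*} (q : List α) (h : CondB3 q) : CondC3 q := by
  obtain ⟨k, u, v, w, hnd, hq⟩ := h
  rintro a b c R rfl
  exact isInfix_of_prefix_or_suffix (prefix_or_suffix_of_isInfix hnd hq)
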